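/- There exists an MKL instance with two labels (k=2), terminal sets T_1 and T_2, and α = 0.6, such that for every valid labeling f of minimum cost, the set of labeled edges {e ∈ E : f(e) ≠ ∅} is not a minimum-cardinality edge subset connecting the anchor a to all terminals of T_1 ∪ T_2; in particular, the optimal MKL solution for α=0.6 is in general not a minimum directed Steiner tree over the union of all terminal sets. Specifically, there is an instance admitting a Steiner tree over all terminals with 6 edges but requiring 8 label assignments, while a valid labeling using 7 edges and 7 label assignments achieves strictly smaller cost at α=0.6. -/

import Mathlib

open Finset

/-- There is a directed path from `a` to `t` all of whose edges lie in `F`. -/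
def ReachIn {V : Type*} (F : Set (V × V)) (a t : V) : Prop :=
  Relation.ReflTransGen (fun u v => (u, v) ∈ F) a t

/-- `E_i(f)`: the set of edges of `E` carrying label `i` under the labeling `f`. -/
def EdgesWith {V : Type*} {k : ℕ} (E : Finset (V × V))
    (f : V × V → Finset (Fin k)) (i : Fin k) : Set (V × V) :=
  {e | e ∈ E ∧ i ∈ f e}

/-- `f` is a valid labeling: for every label `i` and every terminal `t ∈ T i`
there is a directed path from the anchor `a` to `t` all of whose edges lie in `E_i(f)`. -/
def ValidLabeling {V : Type*} {k : ℕ} (E : Finset (V × V)) (a : V)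
    (T : Fin k → Finset V) (f : V × V → Finset (Fin k)) : Prop :=
  ∀ i : Fin k, ∀ t ∈ T i, ReachIn (EdgesWith E f i) a t

/-- `L(f) = ∑_{e ∈ E} |f(e)|`. -/
def labelCount {V : Type*} {k : ℕ} (E : Finset (V × V))
    (f : V × V → Finset (Fin k)) : ℕ :=
  ∑ e ∈ E, (f e).card

/-- `N(f) = |{e ∈ E : f(e) ≠ ∅}|`. -/
def edgeCount {V : Type*} {k : ℕ} (E : Finset (V × V))
    (f : V × V → Finset (Fin k)) : ℕ :=
  (E.filter fun e => f e ≠ ∅).card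

/-- The cost `α·L(f) + (1-α)·N(f)` of a labeling. -/
def labelingCost {V : Type*} {k : ℕ} (α : ℝ) (E : Finset (V × V))
    (f : V × V → Finset (Fin k)) : ℝ :=
  α * labelCount E f + (1 - α) * edgeCount E f

/-! The instance has anchor `0` and terminals `5` (label `0`) and `6` (label `1`). Each terminal
is reached either along a shared trunk `0 → 1 → 2 → 3 → 4` followed by `4 → 5` resp. `4 → 6`
(six edges for both terminals together) or along a private detour `0 → 7 → 8 → 5` resp.
`0 → 9 → 10 → 11 → 6` (seven edges). Every vertex other than `5` and `6` has a single in-edge,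
so each label must cover its whole shared route or its whole detour. A labeling using at most six
edges therefore sends both labels along the trunk, at cost at least `0.6·10 + 0.4·6 = 8.4`,
whereas the detour labeling costs `0.6·7 + 0.4·7 = 7`. -/

theorem ReachIn.mono {V : Type*} {S S' : Set (V × V)} (hSS' : S ⊆ S') {a t : V}
    (h : ReachIn S a t) : ReachIn S' a t :=
  Relation.ReflTransGen.mono (fun _ _ he => hSS' he) a t h

theorem ReachIn.exists_last_edge {V : Type*} {S : Set (V × V)} {a v : V} (h : ReachIn S a v)
    (hv : v ≠ a) : ∃ u, ReachIn S a u ∧ (u, v) ∈ S :=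
  (Relation.ReflTransGen.cases_tail h).resolve_left hv

theorem ReachIn.of_unique_in_edge {V : Type*} {E : Finset (V × V)} {S : Set (V × V)}
    (hS : S ⊆ ↑E) {a v : V} (h : ReachIn S a v) (hv : v ≠ a) (u : V)
    (hu : ∀ w, (w, v) ∈ E → w = u) : ReachIn S a u ∧ (u, v) ∈ S := by
  obtain ⟨w, hw, hwv⟩ := h.exists_last_edge hv
  obtain rfl := hu w (hS hwv)
  exact ⟨hw, hwv⟩

theorem edgesWith_eq_coe_filter {V : Type*} {k : ℕ} (E : Finset (V × V))
    (f : V × V → Finset (Fin k)) (i : Fin k) :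
    EdgesWith E f i = ↑(E.filter fun e => i ∈ f e) := by
  ext e
  simp [EdgesWith]

theorem filter_mem_subset_filter_ne_empty {V : Type*} {k : ℕ} (E : Finset (V × V))
    (f : V × V → Finset (Fin k)) (i : Fin k) :
    E.filter (fun e => i ∈ f e) ⊆ E.filter fun e => f e ≠ ∅ :=
  monotone_filter_right E fun _ _ => ne_empty_of_mem

theorem labelCount_eq_sum_card_filter {V : Type*} {k : ℕ} (E : Finset (V × V))
    (f : V × V → Finset (Fin k)) :
    labelCount E f = ∑ i, (E.filter fun e => i ∈ f e).card := by
  simp only [labelCount, card_filter]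
  rw [sum_comm]
  refine sum_congr rfl fun e _ => ?_
  simp

namespace MKLExample

def edges : Finset (Fin 12 × Fin 12) :=
  {(0,1),(1,2),(2,3),(3,4),(4,5),(4,6),(0,7),(7,8),(8,5),(0,9),(9,10),(10,11),(11,6)}

def terminal : Fin 2 → Fin 12 := ![5, 6]

def terminals (i : Fin 2) : Finset (Fin 12) := {terminal i}

def sharedRoute : Fin 2 → Finset (Fin 12 × Fin 12) :=
  ![{(0,1),(1,2),(2,3),(3,4),(4,5)}, {(0,1),(1,2),(2,3),(3,4),(4,6)}]

def detour : Fin 2 → Finset (Fin 12 × Fin 12) :=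
  ![{(0,7),(7,8),(8,5)}, {(0,9),(9,10),(10,11),(11,6)}]

def steinerTree : Finset (Fin 12 × Fin 12) := sharedRoute 0 ∪ sharedRoute 1

def detourLabeling (e : Fin 12 × Fin 12) : Finset (Fin 2) := univ.filter fun i => e ∈ detour i

theorem card_steinerTree : steinerTree.card = 6 := by decide

theorem reachIn_sharedRoute (i : Fin 2) :
    ReachIn (↑(sharedRoute i) : Set (Fin 12 × Fin 12)) 0 (terminal i) := by
  fin_cases i
  · exact List.relationReflTransGen_of_exists_isChain_cons [1, 2, 3, 4, 5] (by decide) rfl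
  · exact List.relationReflTransGen_of_exists_isChain_cons [1, 2, 3, 4, 6] (by decide) rfl

theorem reachIn_detour (i : Fin 2) :
    ReachIn (↑(detour i) : Set (Fin 12 × Fin 12)) 0 (terminal i) := by
  fin_cases i
  · exact List.relationReflTransGen_of_exists_isChain_cons [7, 8, 5] (by decide) rfl
  · exact List.relationReflTransGen_of_exists_isChain_cons [9, 10, 11, 6] (by decide) rfl

section Routes

variable {S : Set (Fin 12 × Fin 12)}

theorem trunk_mem_of_reachIn_four (hS : S ⊆ ↑edges) (h : ReachIn S 0 4) :
    (0, 1) ∈ S ∧ (1, 2) ∈ S ∧ (2, 3) ∈ S ∧ (3, 4) ∈ S := by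
  obtain ⟨h3, e34⟩ := h.of_unique_in_edge hS (by decide) 3 (by decide)
  obtain ⟨h2, e23⟩ := h3.of_unique_in_edge hS (by decide) 2 (by decide)
  obtain ⟨h1, e12⟩ := h2.of_unique_in_edge hS (by decide) 1 (by decide)
  obtain ⟨-, e01⟩ := h1.of_unique_in_edge hS (by decide) 0 (by decide)
  exact ⟨e01, e12, e23, e34⟩

theorem route_subset_of_reachIn_terminal (hS : S ⊆ ↑edges) (i : Fin 2)
    (h : ReachIn S 0 (terminal i)) : ↑(sharedRoute i) ⊆ S ∨ ↑(detour i) ⊆ S := by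
  obtain ⟨u, hu, hut⟩ := h.exists_last_edge (by fin_cases i <;> decide)
  fin_cases i
  · obtain rfl | rfl : u = 4 ∨ u = 8 :=
      (by decide : ∀ w, (w, (5 : Fin 12)) ∈ edges → w = 4 ∨ w = 8) u (hS hut)
    · left
      simp_all [terminal, sharedRoute, Set.insert_subset_iff, trunk_mem_of_reachIn_four hS hu]
    · obtain ⟨h7, e78⟩ := hu.of_unique_in_edge hS (by decide) 7 (by decide)
      obtain ⟨-, e07⟩ := h7.of_unique_in_edge hS (by decide) 0 (by decide)
      right
      simp_all [terminal, detour, Set.insert_subset_iff]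
  · obtain rfl | rfl : u = 4 ∨ u = 11 :=
      (by decide : ∀ w, (w, (6 : Fin 12)) ∈ edges → w = 4 ∨ w = 11) u (hS hut)
    · left
      simp_all [terminal, sharedRoute, Set.insert_subset_iff, trunk_mem_of_reachIn_four hS hu]
    · obtain ⟨h10, e1011⟩ := hu.of_unique_in_edge hS (by decide) 10 (by decide)
      obtain ⟨h9, e910⟩ := h10.of_unique_in_edge hS (by decide) 9 (by decide)
      obtain ⟨-, e09⟩ := h9.of_unique_in_edge hS (by decide) 0 (by decide)
      right
      simp_all [terminal, detour, Set.insert_subset_iff]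

end Routes

theorem detour_subset_edges : ∀ i, detour i ⊆ edges := by decide

theorem detourLabeling_valid : ValidLabeling edges 0 terminals detourLabeling := by
  intro i t ht
  rw [mem_singleton.1 ht, edgesWith_eq_coe_filter]
  refine (reachIn_detour i).mono (coe_subset.2 fun e he => mem_filter.2 ⟨?_, ?_⟩)
  · exact detour_subset_edges i he
  · simpa [detourLabeling] using he

theorem labelingCost_detourLabeling : labelingCost (6 / 10) edges detourLabeling = 7 := by
  rw [labelingCost, show labelCount edges detourLabeling = 7 by decide,
    show edgeCount edges detourLabeling = 7 by decide]
  norm_num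

theorem reachIn_steinerTree :
    ∀ t ∈ terminals 0 ∪ terminals 1, ReachIn (↑steinerTree : Set (Fin 12 × Fin 12)) 0 t := by
  intro t ht
  obtain ⟨i, rfl⟩ : ∃ i, t = terminal i := by
    rcases mem_union.1 ht with h | h <;> exact ⟨_, mem_singleton.1 h⟩
  refine (reachIn_sharedRoute i).mono (coe_subset.2 ?_)
  fin_cases i
  exacts [subset_union_left, subset_union_right]

section LabelingsOnFewEdges

variable {f : Fin 12 × Fin 12 → Finset (Fin 2)}

theorem sharedRoute_subset_of_edgeCount_le_six (hf : ValidLabeling edges 0 terminals f)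
    (h6 : edgeCount edges f ≤ 6) (i : Fin 2) :
    sharedRoute i ⊆ edges.filter fun e => i ∈ f e := by
  have route : ∀ j, sharedRoute j ⊆ edges.filter (fun e => j ∈ f e) ∨
      detour j ⊆ edges.filter fun e => j ∈ f e := fun j => by
    have hS : EdgesWith edges f j ⊆ ↑edges := fun e he => he.1
    simpa only [edgesWith_eq_coe_filter, coe_subset] using
      route_subset_of_reachIn_terminal hS j (hf j _ (mem_singleton_self _))
  have hunion : ∀ p q, p ⊆ edges.filter (fun e => 0 ∈ f e) →
      q ⊆ edges.filter (fun e => 1 ∈ f e) → (p ∪ q).card ≤ 6 := fun p q hp hq =>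
    (card_le_card (union_subset (hp.trans (filter_mem_subset_filter_ne_empty _ _ _))
      (hq.trans (filter_mem_subset_filter_ne_empty _ _ _)))).trans h6
  rcases route 0 with h0 | h0 <;> rcases route 1 with h1 | h1
  · fin_cases i <;> assumption
  all_goals exact absurd (hunion _ _ h0 h1) (by decide)

theorem ten_le_labelCount_of_edgeCount_le_six (hf : ValidLabeling edges 0 terminals f)
    (h6 : edgeCount edges f ≤ 6) :
    10 ≤ labelCount edges f := by
  rw [labelCount_eq_sum_card_filter]
  calc 10 = ∑ i, (sharedRoute i).card := by decide
    _ ≤ _ := sum_le_sum fun i _ =>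
      card_le_card (sharedRoute_subset_of_edgeCount_le_six hf h6 i)

theorem seven_lt_labelingCost_of_edgeCount_le_six (hf : ValidLabeling edges 0 terminals f)
    (h6 : edgeCount edges f ≤ 6) :
    7 < labelingCost (6 / 10) edges f := by
  have hL : (10 : ℝ) ≤ labelCount edges f := by
    exact_mod_cast ten_le_labelCount_of_edgeCount_le_six hf h6
  have hN : (6 : ℝ) ≤ edgeCount edges f := by
    have hsub : steinerTree ⊆ edges.filter fun e => f e ≠ ∅ := union_subset
      ((sharedRoute_subset_of_edgeCount_le_six hf h6 0).trans
        (filter_mem_subset_filter_ne_empty _ _ _))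
      ((sharedRoute_subset_of_edgeCount_le_six hf h6 1).trans
        (filter_mem_subset_filter_ne_empty _ _ _))
    exact_mod_cast card_steinerTree ▸ card_le_card hsub
  rw [labelingCost]
  linarith

end LabelingsOnFewEdges

end MKLExample

/-- There is an MKL instance with two labels and `α = 0.6` such that
for every valid labeling `f` of minimum cost, the set of labeled edges of `f` is not a
minimum-cardinality edge subset of `E` connecting the anchor `a` to all terminals of
`T 0 ∪ T 1`: the optimal MKL solution is in general not a minimum directed Steiner tree
over the union of the terminal sets. Specifically, the instance admits a Steiner tree
over all terminals with `6` edges on which every valid labeling requires at least `8`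
label assignments, while some valid labeling with `7` edges and `7` label assignments
achieves strictly smaller cost at `α = 0.6`. -/
theorem mkl_not_steiner_tree_over_union :
    ∃ (n : ℕ) (E : Finset (Fin n × Fin n)) (a : Fin n) (T : Fin 2 → Finset (Fin n)),
      (∀ i, a ∉ T i) ∧
      (∃ f : Fin n × Fin n → Finset (Fin 2), ValidLabeling E a T f) ∧
      (∀ f : Fin n × Fin n → Finset (Fin 2), ValidLabeling E a T f →
        (∀ g : Fin n × Fin n → Finset (Fin 2), ValidLabeling E a T g →
          labelingCost (6/10) E f ≤ labelingCost (6/10) E g) →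
        ¬ ((∀ t ∈ T 0 ∪ T 1,
              ReachIn (↑(E.filter (fun e => f e ≠ ∅)) : Set (Fin n × Fin n)) a t) ∧
           (∀ F' : Finset (Fin n × Fin n), F' ⊆ E →
              (∀ t ∈ T 0 ∪ T 1, ReachIn (↑F' : Set (Fin n × Fin n)) a t) →
              (E.filter (fun e => f e ≠ ∅)).card ≤ F'.card))) ∧
      (∃ F : Finset (Fin n × Fin n), F ⊆ E ∧
        (∀ t ∈ T 0 ∪ T 1, ReachIn (↑F : Set (Fin n × Fin n)) a t) ∧ F.card = 6 ∧
        (∀ f : Fin n × Fin n → Finset (Fin 2), ValidLabeling E a T f →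
          E.filter (fun e => f e ≠ ∅) ⊆ F → 8 ≤ labelCount E f) ∧
        (∃ g : Fin n × Fin n → Finset (Fin 2), ValidLabeling E a T g ∧
          edgeCount E g = 7 ∧ labelCount E g = 7 ∧
          ∀ f : Fin n × Fin n → Finset (Fin 2), ValidLabeling E a T f →
            E.filter (fun e => f e ≠ ∅) ⊆ F →
            labelingCost (6/10) E g < labelingCost (6/10) E f)) := by
  open MKLExample in
  refine ⟨12, edges, 0, terminals, by decide, ⟨detourLabeling, detourLabeling_valid⟩, ?_,
    steinerTree, by decide, reachIn_steinerTree, card_steinerTree, ?_,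
    detourLabeling, detourLabeling_valid, by decide, by decide, ?_⟩
  · rintro f hf hmin ⟨-, hminimal⟩
    have h6 : edgeCount edges f ≤ 6 :=
      card_steinerTree ▸ hminimal steinerTree (by decide) reachIn_steinerTree
    have := hmin detourLabeling detourLabeling_valid
    linarith [seven_lt_labelingCost_of_edgeCount_le_six hf h6, labelingCost_detourLabeling]
  · intro f hf hsub
    have := ten_le_labelCount_of_edgeCount_le_six hf (card_steinerTree ▸ card_le_card hsub)
    omega
  · intro f hf hsub
    exact labelingCost_detourLabeling ▸
      seven_lt_labelingCost_of_edgeCount_le_six hf (card_steinerTree ▸ card_le_card hsub)
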